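/- arXiv:2509.08832 — 4 statements merged into one kernel-verified Lean document; each statement's English description precedes it below -/
import Mathlib

section
/- If ρ : L^∞(P) → ℝ is a risk measure, then its convex conjugate ρ*(Y) = sup_{X ∈ L^∞} (E[XY] - ρ(X)) is finite only if Y is the density of an absolutely continuous probability measure; that is, if ρ*(Y) < ∞ then Y ≥ 0 a.s. and E[Y] = 1. -/
open MeasureTheory
open scoped ENNReal
noncomputable section

/-
If `ρ*(Y) < ∞`, then `E[XY] - ρ(X)` is bounded above by some `M` uniformly in `X`. Testing with
constants `X = c`, cash additivity gives `c (E[Y] - 1) ≤ M + ρ(0)` for every real `c`, forcing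
`E[Y] = 1`. Testing with `X = -c 1_s` for measurable `s` and `c ≥ 0`, monotonicity gives
`ρ(X) ≤ ρ(0)`, hence `c ∫_s (-Y) ≤ M + ρ(0)`, forcing `∫_s Y ≥ 0` for every `s`, i.e. `Y ≥ 0` a.s.
-/

theorem EReal.exists_forall_le_of_iSup_coe_lt_top {ι : Sort*} {f : ι → ℝ}
    (h : ⨆ i, (f i : EReal) < ⊤) : ∃ M : ℝ, ∀ i, f i ≤ M := by
  obtain ⟨M, hM, -⟩ := EReal.lt_iff_exists_real_btwn.1 h
  exact ⟨M, fun i => EReal.coe_le_coe_iff.1 ((le_iSup (fun i => (f i : EReal)) i).trans hM.le)⟩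

theorem nonpos_of_forall_nonneg_mul_le {a B : ℝ} (h : ∀ c : ℝ, 0 ≤ c → c * a ≤ B) : a ≤ 0 := by
  by_contra! ha
  have := h ((|B| + 1) / a) (by positivity)
  rw [div_mul_cancel₀ _ ha.ne'] at this
  linarith [le_abs_self B]

theorem eq_zero_of_forall_mul_le {a B : ℝ} (h : ∀ c : ℝ, c * a ≤ B) : a = 0 := by
  refine le_antisymm (nonpos_of_forall_nonneg_mul_le fun c _ => h c) ?_
  exact neg_nonpos.1 (nonpos_of_forall_nonneg_mul_le fun c _ => by simpa using h (-c))

namespace MeasureTheory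

variable {Ω : Type*} [MeasurableSpace Ω] {P : Measure Ω}

theorem integral_Lp_const_mul [IsFiniteMeasure P] (c : ℝ) (Y : Ω → ℝ) :
    ∫ ω, Lp.const ⊤ P c ω * Y ω ∂P = c * ∫ ω, Y ω ∂P := by
  rw [← integral_const_mul]
  refine integral_congr_ae ?_
  filter_upwards [Lp.coeFn_const (p := ⊤) (μ := P) (c := c)] with ω hω
  rw [hω, Function.const_apply]

theorem integral_indicatorConstLp_mul {s : Set Ω} (hs : MeasurableSet s) (hPs : P s ≠ ∞)
    (c : ℝ) (Y : Ω → ℝ) :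
    ∫ ω, indicatorConstLp ⊤ hs hPs c ω * Y ω ∂P = c * ∫ ω in s, Y ω ∂P := by
  rw [← integral_const_mul, ← integral_indicator hs]
  refine integral_congr_ae ?_
  filter_upwards [indicatorConstLp_coeFn (p := ⊤) (hs := hs) (hμs := hPs) (c := c)] with ω hω
  by_cases hω' : ω ∈ s <;> simp [hω, hω']

theorem indicatorConstLp_nonpos {s : Set Ω} (hs : MeasurableSet s) (hPs : P s ≠ ∞) {c : ℝ}
    (hc : c ≤ 0) : indicatorConstLp ⊤ hs hPs c ≤ 0 := by
  rw [← Lp.coeFn_le]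
  filter_upwards [indicatorConstLp_coeFn (p := ⊤) (hs := hs) (hμs := hPs) (c := c),
    Lp.coeFn_zero ℝ ⊤ P] with ω hω h0
  rw [hω, h0]
  exact Set.indicator_nonpos (fun _ _ => hc) ω

section ConjugateBound

variable {ρ : Lp ℝ ⊤ P → ℝ} {Y : Ω → ℝ} {M : ℝ}

theorem integral_eq_one_of_conjugate_le [IsFiniteMeasure P]
    (hcash : ∀ (X : Lp ℝ ⊤ P) (a : ℝ), ρ (X + Lp.const ⊤ P a) = ρ X + a)
    (hM : ∀ X : Lp ℝ ⊤ P, ∫ ω, X ω * Y ω ∂P - ρ X ≤ M) :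
    ∫ ω, Y ω ∂P = 1 := by
  suffices ∫ ω, Y ω ∂P - 1 = 0 by linarith
  refine eq_zero_of_forall_mul_le (B := M + ρ 0) fun c => ?_
  have hc := hM (Lp.const ⊤ P c)
  rw [integral_Lp_const_mul, ← zero_add (Lp.const ⊤ P c), hcash] at hc
  linarith

theorem ae_nonneg_of_conjugate_le [IsFiniteMeasure P] (hY : Integrable Y P)
    (hmono : ∀ X Y : Lp ℝ ⊤ P, X ≤ Y → ρ X ≤ ρ Y)
    (hM : ∀ X : Lp ℝ ⊤ P, ∫ ω, X ω * Y ω ∂P - ρ X ≤ M) :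
    0 ≤ᵐ[P] Y := by
  refine ae_nonneg_of_forall_setIntegral_nonneg hY fun s hs _ => ?_
  refine neg_nonpos.1 (nonpos_of_forall_nonneg_mul_le (B := M + ρ 0) fun c hc => ?_)
  have hX := hM (indicatorConstLp ⊤ hs (measure_ne_top P s) (-c))
  have hρ := hmono _ _ (indicatorConstLp_nonpos hs (measure_ne_top P s) (neg_nonpos.2 hc))
  rw [integral_indicatorConstLp_mul] at hX
  linarith

end ConjugateBound

end MeasureTheory

/-- if the convex conjugate of a risk measure is finite at `Y ∈ L¹`,
then `Y ≥ 0` a.s. and `E[Y] = 1`, i.e. `Y` is the density of an absolutely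
continuous probability measure. -/
theorem conjugate_finite_implies_density
    {Ω : Type*} [MeasurableSpace Ω] (P : Measure Ω) [IsProbabilityMeasure P]
    (ρ : Lp ℝ ⊤ P → ℝ)
    (hmono : ∀ X Y : Lp ℝ ⊤ P, X ≤ Y → ρ X ≤ ρ Y)
    (hcash : ∀ (X : Lp ℝ ⊤ P) (a : ℝ), ρ (X + Lp.const ⊤ P a) = ρ X + a)
    (Y : Lp ℝ 1 P)
    (hfin : (⨆ X : Lp ℝ ⊤ P, ((∫ ω, X ω * Y ω ∂P - ρ X : ℝ) : EReal)) < ⊤) :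
    (∀ᵐ ω ∂P, 0 ≤ Y ω) ∧ ∫ ω, Y ω ∂P = 1 := by
  obtain ⟨M, hM⟩ := EReal.exists_forall_le_of_iSup_coe_lt_top hfin
  exact ⟨ae_nonneg_of_conjugate_le (L1.integrable_coeFn Y) hmono hM,
    integral_eq_one_of_conjugate_le hcash hM⟩
end
end

section
/- For β ∈ [0,1), there do not exist a probability measure Q ≪ P and r ∈ ℝ such that VaR_β(X) ≥ E^Q[X] − r for all X ∈ L^∞(P), provided β ≥ sup over P-atoms C of P(C) and P has an event of positive measure at most β. -/
open MeasureTheory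
noncomputable section

/-- Value at risk at level `β`. -/
def VaR {Ω : Type*} [MeasurableSpace Ω] (P : Measure Ω) [IsProbabilityMeasure P]
    (β : ℝ) (X : Lp ℝ ⊤ P) : ℝ :=
  sInf {x : ℝ | 1 - β ≤ (P {ω | X ω ≤ x}).toReal}

/-- A `P`-atom. -/
def IsPAtom {Ω : Type*} [MeasurableSpace Ω] (P : Measure Ω) (C : Set Ω) : Prop :=
  MeasurableSet C ∧ 0 < P C ∧ ∀ B ⊆ C, MeasurableSet B → P B = 0 ∨ P B = P C

/-!
On the set `S = {dQ/dP > 0}` the measures `P` and `Q` have the same null sets. Let `t` be the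
infimum of the `P`-measures of the non-null measurable subsets of `S`. If `t ≥ β > 0`, a non-null
subset of measure `< 2t` cannot be split into two non-null parts, so it is a `P`-atom, hence of
measure `≤ β`: a contradiction. Hence some `C` has `Q(C) > 0` and `P(C) ≤ β`. Then
`VaR_β(K·1_C) ≤ 0`, because `K·1_C ≤ 0` with probability `1 - P(C) ≥ 1 - β`, whereas
`E^Q[K·1_C] - r = K·Q(C) - r` exceeds `0` for large `K`.
-/

section

variable {Ω : Type*} [MeasurableSpace Ω]

lemma isPAtom_of_measureReal_lt_two_mul {μ : Measure Ω} [IsFiniteMeasure μ] {A : Set Ω} {t : ℝ}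
    (hA : MeasurableSet A) (hA0 : 0 < μ A) (hAt : μ.real A < 2 * t)
    (ht : ∀ B ⊆ A, MeasurableSet B → 0 < μ B → t ≤ μ.real B) : IsPAtom μ A := by
  refine ⟨hA, hA0, fun B hBA hB => ?_⟩
  by_contra! ⟨hB0, hBA0⟩
  have hAB0 : μ (A \ B) ≠ 0 := fun h => hBA0 (measure_eq_measure_of_null_sdiff hBA h)
  have htB := ht B hBA hB (pos_iff_ne_zero.2 hB0)
  have htAB := ht (A \ B) Set.sdiff_subset (hA.diff hB) (pos_iff_ne_zero.2 hAB0)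
  rw [measureReal_sdiff hBA hB] at htAB
  linarith

lemma exists_subset_measure_pos_measureReal_le {μ : Measure Ω} [IsFiniteMeasure μ] {β : ℝ}
    (hβ : 0 < β) (hatoms : ∀ C, IsPAtom μ C → μ.real C ≤ β) {S : Set Ω} (hS : MeasurableSet S)
    (hS0 : 0 < μ S) : ∃ A ⊆ S, MeasurableSet A ∧ 0 < μ A ∧ μ.real A ≤ β := by
  by_contra! hbig
  set T := μ.real '' {A | A ⊆ S ∧ MeasurableSet A ∧ 0 < μ A}
  have hT : T.Nonempty := ⟨_, S, ⟨subset_rfl, hS, hS0⟩, rfl⟩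
  have hTβ : β ≤ sInf T :=
    le_csInf hT (by rintro _ ⟨A, ⟨hAS, hA, hA0⟩, rfl⟩; exact (hbig A hAS hA hA0).le)
  have hTbdd : BddBelow T := ⟨0, by rintro _ ⟨A, -, rfl⟩; exact measureReal_nonneg⟩
  obtain ⟨_, ⟨A, ⟨hAS, hA, hA0⟩, rfl⟩, hAT⟩ :=
    exists_lt_of_csInf_lt hT (show sInf T < 2 * sInf T by linarith)
  have hatom : IsPAtom μ A := isPAtom_of_measureReal_lt_two_mul hA hA0 hAT
    fun B hBA hB hB0 => csInf_le hTbdd ⟨B, ⟨hBA.trans hAS, hB, hB0⟩, rfl⟩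
  exact (hbig A hAS hA hA0).not_ge (hatoms A hatom)

lemma exists_measure_ne_zero_restrict_absolutelyContinuous {μ ν : Measure Ω} [SigmaFinite μ]
    [SigmaFinite ν] (hνμ : ν ≪ μ) (hν : ν ≠ 0) :
    ∃ S, MeasurableSet S ∧ μ S ≠ 0 ∧ μ.restrict S ≪ ν := by
  set S := {x | ν.rnDeriv μ x ≠ 0}
  have hzero (s : Set Ω) : ν s = 0 ↔ μ (S ∩ s) = 0 := by
    conv_lhs => rw [← Measure.withDensity_rnDeriv_eq ν μ hνμ]
    exact withDensity_apply_eq_zero' (Measure.measurable_rnDeriv ν μ).aemeasurable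
  refine ⟨S, Measure.measurable_rnDeriv ν μ (measurableSet_singleton 0).compl, ?_, ?_⟩
  · simpa using (hzero Set.univ).not.1 (by simpa using hν)
  · refine Measure.AbsolutelyContinuous.mk fun s hs hνs => ?_
    rw [Measure.restrict_apply hs, Set.inter_comm]
    exact (hzero s).1 hνs

variable {P : Measure Ω} [IsProbabilityMeasure P] {β : ℝ}

lemma VaR_le_of_one_sub_le_measureReal (hβ : β < 1) (X : Lp ℝ ⊤ P) {x : ℝ}
    (hx : 1 - β ≤ P.real {ω | X ω ≤ x}) : VaR P β X ≤ x := by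
  refine csInf_le ⟨-lpNorm X ⊤ P, fun y hy => ?_⟩ hx
  by_contra! hyX
  have hnull : P {ω | X ω ≤ y} = 0 := by
    refine measure_mono_null (fun ω hω => ?_) (ae_iff.1 (ae_le_lpNorm_exponent_top (Lp.memLp X)))
    have : X ω ≤ y := hω
    simp only [Set.mem_ofPred_eq, not_le, Real.norm_eq_abs]
    linarith [neg_abs_le (X ω)]
  simp only [Set.mem_ofPred_eq, hnull, ENNReal.toReal_zero] at hy
  linarith

lemma VaR_indicatorConstLp_nonpos (hβ : β < 1) {C : Set Ω} (hC : MeasurableSet C)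
    (hCβ : P.real C ≤ β) (K : ℝ) : VaR P β (indicatorConstLp ⊤ hC (measure_ne_top P C) K) ≤ 0 := by
  refine VaR_le_of_one_sub_le_measureReal hβ _ ?_
  have hCc : Cᶜ ≤ᵐ[P] {ω | indicatorConstLp ⊤ hC (measure_ne_top P C) K ω ≤ 0} := by
    filter_upwards [indicatorConstLp_coeFn (p := ⊤) (hs := hC) (c := K)] with ω hω hωC
    change _ ≤ (0 : ℝ)
    rw [hω, Set.indicator_of_notMem hωC]
  calc 1 - β ≤ P.real Cᶜ := by rw [probReal_compl_eq_one_sub hC]; linarith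
    _ ≤ _ := ENNReal.toReal_mono (measure_ne_top _ _) (measure_mono_ae hCc)

end

/-- if every `P`-atom has probability at most `β` and there is an event of
positive probability at most `β`, then no affine minorant `X ↦ E^Q[X] - r` with
`Q ≪ P` a probability measure lies below `VaR_β`. -/
theorem VaR_no_affine_minorant
    {Ω : Type*} [MeasurableSpace Ω] (P : Measure Ω) [IsProbabilityMeasure P]
    (β : ℝ) (hβ : β ∈ Set.Ico (0 : ℝ) 1)
    (hatoms : ∀ C : Set Ω, IsPAtom P C → (P C).toReal ≤ β)
    (hev : ∃ D : Set Ω, MeasurableSet D ∧ 0 < P D ∧ (P D).toReal ≤ β) :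
    ¬ ∃ (Q : Measure Ω) (r : ℝ), IsProbabilityMeasure Q ∧ Q ≪ P ∧
      ∀ X : Lp ℝ ⊤ P, ∫ ω, X ω ∂Q - r ≤ VaR P β X := by
  rintro ⟨Q, r, hQ, hQP, hminor⟩
  obtain ⟨D, -, hD0, hDβ⟩ := hev
  have hβ0 : 0 < β := (ENNReal.toReal_pos hD0.ne' (measure_ne_top P D)).trans_le hDβ
  obtain ⟨S, hS, hS0, hPS⟩ :=
    exists_measure_ne_zero_restrict_absolutelyContinuous hQP (IsProbabilityMeasure.ne_zero Q)
  obtain ⟨C, hCS, hC, hC0, hCβ⟩ :=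
    exists_subset_measure_pos_measureReal_le hβ0 hatoms hS (pos_iff_ne_zero.2 hS0)
  have hQC : 0 < Q.real C := ENNReal.toReal_pos
    (fun h => hC0.ne' (Measure.restrict_eq_self P hCS ▸ hPS h)) (measure_ne_top Q C)
  set X := indicatorConstLp ⊤ hC (measure_ne_top P C) ((r + 1) / Q.real C)
  have hX : ∫ ω, X ω ∂Q = r + 1 := by
    rw [integral_congr_ae (hQP.ae_eq indicatorConstLp_coeFn), integral_indicator_const _ hC,
      smul_eq_mul, mul_div_cancel₀ _ hQC.ne']
  linarith [hminor X, VaR_indicatorConstLp_nonpos hβ.2 hC hCβ ((r + 1) / Q.real C)]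
end
end

section
/- Richter's theorem: Let (A, 𝒜, μ) be a non-atomic finite measure space and F : A → 2^(ℝ^d) a correspondence. Then the Aumann integral ∫_A F(a) μ(da) = { ∫_A f dμ : f an integrable selector of F } is a convex subset of ℝ^d. -/
/-!
If `f`, `g` are integrable selectors and `∫ a in B, (f - g) a ∂μ = p • ∫ a, (f - g) a ∂μ`, then
the selector equal to `f` on `B` and to `g` off `B` integrates to `p • ∫ f + (1 - p) • ∫ g`.
Such a `B` exists by Lyapunov's convexity theorem, proved following Lindenstrauss. Reweighting `μ`
by `1 + ‖f - g‖` makes the vector function bounded, hence in `L²`. The `[0, 1]`-valued `h ∈ L²`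
with `∫ h • (f - g) = p • ∫ (f - g)` form a weak-* compact convex set (Banach–Alaoglu through the
Riesz isomorphism), which has an extreme point `h` by Krein–Milman. If `0 < h < 1` on a set of
positive measure, non-atomicity splits it into `d + 1` disjoint pieces of positive measure; a
nontrivial linear relation between the integrals of `min h (1 - h) • (f - g)` over the pieces
yields a nonzero `G` orthogonal to `f - g` with `h ± G` still in the set, contradicting
extremality. So `h` is an indicator `1_B`.
-/

open MeasureTheory Set Module Function
open scoped ENNReal NNReal InnerProductSpace

noncomputable def InnerProductSpace.toWeakDual (E : Type*) [NormedAddCommGroup E]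
    [InnerProductSpace ℝ E] [CompleteSpace E] : E ≃ₗ[ℝ] WeakDual ℝ E :=
  (InnerProductSpace.toDual ℝ E).toLinearEquiv.trans StrongDual.toWeakDual

@[simp]
lemma InnerProductSpace.toWeakDual_apply {E : Type*} [NormedAddCommGroup E]
    [InnerProductSpace ℝ E] [CompleteSpace E] (x y : E) : toWeakDual E x y = ⟪x, y⟫_ℝ := rfl

lemma eq_zero_of_add_mem_of_sub_mem {E : Type*} [AddCommGroup E] [Module ℝ E] {S : Set E}
    {x y : E} (hx : x ∈ extremePoints ℝ S) (h₁ : x + y ∈ S) (h₂ : x - y ∈ S) : y = 0 := by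
  have hseg : x ∈ openSegment ℝ (x + y) (x - y) :=
    ⟨1 / 2, 1 / 2, by norm_num, by norm_num, by norm_num, by module⟩
  simpa using hx.2 h₁ h₂ hseg

lemma exists_sum_smul_eq_zero_abs_le_one {ι E : Type*} [Fintype ι] [AddCommGroup E]
    [Module ℝ E] [FiniteDimensional ℝ E] (hcard : finrank ℝ E < Fintype.card ι) (v : ι → E) :
    ∃ β : ι → ℝ, β ≠ 0 ∧ (∀ j, |β j| ≤ 1) ∧ ∑ j, β j • v j = 0 := by
  obtain ⟨α, hα, j₀, hj₀⟩ := Fintype.not_linearIndependent_iff.1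
    fun hli : LinearIndependent ℝ v => hcard.not_ge hli.fintype_card_le_finrank
  have hα0 : α ≠ 0 := fun h => hj₀ (by simp [h])
  have hnorm : ‖‖α‖⁻¹ • α‖ = 1 := by
    rw [norm_smul, norm_inv, norm_norm, inv_mul_cancel₀ (norm_ne_zero_iff.2 hα0)]
  refine ⟨‖α‖⁻¹ • α, fun h => by simp [h] at hnorm, fun j => ?_, ?_⟩
  · simpa only [Real.norm_eq_abs, hnorm] using norm_le_pi_norm (‖α‖⁻¹ • α) j
  · simp only [Pi.smul_apply, smul_eq_mul, mul_smul, ← Finset.smul_sum, hα, smul_zero]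

namespace MeasureTheory

variable {A : Type*} [MeasurableSpace A]

/-- Stronger than `NoAtoms`, which only asks singletons to be null. -/
def Measure.IsNonatomic (μ : Measure A) : Prop :=
  ∀ C : Set A, MeasurableSet C → 0 < μ C → ∃ B ⊆ C, MeasurableSet B ∧ 0 < μ B ∧ μ B < μ C

namespace Measure.IsNonatomic

variable {μ ν : Measure A}

lemma exists_pos_sdiff_pos (hμ : μ.IsNonatomic) {C : Set A} (hC : MeasurableSet C)
    (h0 : 0 < μ C) : ∃ B ⊆ C, MeasurableSet B ∧ 0 < μ B ∧ 0 < μ (C \ B) := by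
  obtain ⟨B, hBC, hB, hB0, hBC'⟩ := hμ C hC h0
  refine ⟨B, hBC, hB, hB0, ?_⟩
  rw [measure_sdiff hBC hB.nullMeasurableSet hBC'.ne_top]
  exact tsub_pos_of_lt hBC'

lemma of_absolutelyContinuous (hμ : μ.IsNonatomic) (hνμ : ν ≪ μ) (hμν : μ ≪ ν)
    [IsFiniteMeasure ν] : ν.IsNonatomic := by
  intro C hC hν0
  obtain ⟨B, hBC, hB, hμB, hμCB⟩ :=
    hμ.exists_pos_sdiff_pos hC (pos_of_ne_zero fun h => hν0.ne' (hνμ h))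
  have hνB : 0 < ν B := pos_of_ne_zero fun h => hμB.ne' (hμν h)
  have hνCB : 0 < ν (C \ B) := pos_of_ne_zero fun h => hμCB.ne' (hμν h)
  refine ⟨B, hBC, hB, hνB, ?_⟩
  calc ν B < ν B + ν (C \ B) := ENNReal.lt_add_right (measure_ne_top ν B) hνCB.ne'
    _ = ν C := by rw [measure_add_sdiff hB.nullMeasurableSet, union_eq_self_of_subset_left hBC]

lemma exists_pairwise_disjoint (hμ : μ.IsNonatomic) (n : ℕ) {C : Set A} (hC : MeasurableSet C)
    (h0 : 0 < μ C) :
    ∃ P : Fin n → Set A, (∀ j, MeasurableSet (P j) ∧ P j ⊆ C ∧ 0 < μ (P j)) ∧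
      Pairwise (Disjoint on P) := by
  induction n generalizing C with
  | zero => exact ⟨Fin.elim0, fun j => j.elim0, fun i => i.elim0⟩
  | succ n ih =>
    obtain ⟨B, hBC, hB, hB0, hCB0⟩ := hμ.exists_pos_sdiff_pos hC h0
    obtain ⟨P, hP, hdisj⟩ := ih (hC.diff hB) hCB0
    have hBP : ∀ j, Disjoint B (P j) := fun j =>
      disjoint_sdiff_right.mono_right (hP j).2.1
    refine ⟨Fin.cons B P, fun j => ?_, fun i j hij => ?_⟩
    · induction j using Fin.cases
      · exact ⟨hB, hBC, hB0⟩
      · simpa using ⟨(hP _).1, (hP _).2.1.trans sdiff_subset, (hP _).2.2⟩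
    · induction i using Fin.cases <;> induction j using Fin.cases
      · exact absurd rfl hij
      · simpa [onFun] using hBP _
      · simpa [onFun] using (hBP _).symm
      · simpa [onFun] using hdisj fun h => hij (congrArg _ h)

theorem exists_integral_smul_eq_zero {E : Type*} [NormedAddCommGroup E] [NormedSpace ℝ E]
    [FiniteDimensional ℝ E] (hμ : μ.IsNonatomic) {C : Set A} (hC : MeasurableSet C)
    (h0 : 0 < μ C) {ψ : A → E} (hψ : Integrable ψ μ) :
    ∃ g : A → ℝ, Measurable g ∧ (∀ a, |g a| ≤ 1) ∧ (∀ a ∉ C, g a = 0) ∧ ¬ g =ᵐ[μ] 0 ∧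
      ∫ a, g a • ψ a ∂μ = 0 := by
  obtain ⟨P, hP, hdisj⟩ := hμ.exists_pairwise_disjoint (finrank ℝ E + 1) hC h0
  obtain ⟨β, hβ0, hβ1, hβsum⟩ :=
    exists_sum_smul_eq_zero_abs_le_one (by simp) fun j => ∫ a in P j, ψ a ∂μ
  obtain ⟨j₀, hj₀⟩ : ∃ j, β j ≠ 0 := Function.ne_iff.1 hβ0
  set g : A → ℝ := fun a => ∑ j, (P j).indicator (fun _ => β j) a with hg
  have hg_mem : ∀ j, ∀ a ∈ P j, g a = β j := fun j a ha => by
    simp only [hg]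
    rw [Finset.sum_eq_single j (fun k _ hkj => indicator_of_notMem
      (disjoint_left.1 (hdisj hkj.symm) ha) _) (by simp), indicator_of_mem ha]
  have hg_notMem : ∀ a, (∀ j, a ∉ P j) → g a = 0 := fun a ha =>
    Finset.sum_eq_zero fun j _ => indicator_of_notMem (ha j) _
  refine ⟨g, Finset.measurable_sum _ fun j _ => measurable_const.indicator (hP j).1,
    fun a => ?_, fun a ha => hg_notMem a fun j h => ha ((hP j).2.1 h), fun hg0 => ?_, ?_⟩
  · by_cases h : ∃ j, a ∈ P j
    · obtain ⟨j, hj⟩ := h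
      exact hg_mem j a hj ▸ hβ1 j
    · simp [hg_notMem a (not_exists.1 h)]
  · exact (hP j₀).2.2.ne' (measure_mono_null (fun a ha => by simp [hg_mem j₀ a ha, hj₀])
      (ae_iff.1 hg0))
  · calc ∫ a, g a • ψ a ∂μ = ∫ a, ∑ j, (P j).indicator (fun a => β j • ψ a) a ∂μ := by
          congr 1 with a
          simp only [hg, Finset.sum_smul]
          congr 1 with j
          by_cases h : a ∈ P j <;> simp [h]
      _ = ∑ j, β j • ∫ a in P j, ψ a ∂μ := by
          rw [integral_finsetSum (f := fun j => (P j).indicator fun a => β j • ψ a) _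
            fun j _ => (hψ.smul (β j)).indicator (hP j).1]
          simp only [integral_indicator (hP _).1, integral_smul]
      _ = 0 := hβsum

end Measure.IsNonatomic

namespace L2

variable {ν : Measure A}

lemma real_inner_eq_integral (f g : Lp ℝ 2 ν) : ⟪f, g⟫_ℝ = ∫ a, f a * g a ∂ν := by
  simp [inner_def, mul_comm]

lemma integrable_mul (f g : Lp ℝ 2 ν) : Integrable (fun a => f a * g a) ν := by
  simpa [mul_comm] using integrable_inner (𝕜 := ℝ) f g

variable {ι : Type*}

/-- The relaxation of `{B | ∀ i, ∫ a in B, Ψ i a ∂ν = c i}` in which indicators of sets are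
replaced by `[0, 1]`-valued functions. -/
def relaxedSolutions (Ψ : ι → Lp ℝ 2 ν) (c : ι → ℝ) : Set (Lp ℝ 2 ν) :=
  {h | (∀ᵐ a ∂ν, h a ∈ Icc (0 : ℝ) 1) ∧ ∀ i, ⟪h, Ψ i⟫_ℝ = c i}

lemma exists_ne_zero_abs_le_inner_eq_zero [Fintype ι] (hν : ν.IsNonatomic) (Ψ : ι → Lp ℝ 2 ν)
    {m : A → ℝ} (hm_meas : Measurable m) (hm : MemLp m 2 ν) (hm0 : 0 ≤ᵐ[ν] m)
    (hC : 0 < ν {a | 0 < m a}) :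
    ∃ G : Lp ℝ 2 ν, G ≠ 0 ∧ (∀ᵐ a ∂ν, |G a| ≤ m a) ∧ ∀ i, ⟪G, Ψ i⟫_ℝ = 0 := by
  have hmΨ : Integrable (fun a => m a • fun i => Ψ i a) ν := Integrable.of_eval fun i =>
    (integrable_mul hm.toLp (Ψ i)).congr (by filter_upwards [hm.coeFn_toLp] with a ha; simp [ha])
  obtain ⟨g, hg_meas, hg1, hgC, hg0, hgΨ⟩ :=
    hν.exists_integral_smul_eq_zero (measurableSet_lt measurable_const hm_meas) hC hmΨ
  have hG : MemLp (fun a => g a * m a) 2 ν :=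
    hm.of_le (hg_meas.mul hm_meas).aestronglyMeasurable (.of_forall fun a => by
      rw [norm_mul, Real.norm_eq_abs (g a)]
      exact mul_le_of_le_one_left (norm_nonneg _) (hg1 a))
  have hgmΨ : Integrable (fun a => g a • m a • fun i => Ψ i a) ν :=
    hmΨ.bdd_smul 1 hg_meas.aestronglyMeasurable (.of_forall hg1)
  refine ⟨hG.toLp, fun h0 => hg0 ?_, ?_, fun i => ?_⟩
  · have hzero := hG.coeFn_toLp
    rw [h0] at hzero
    filter_upwards [hzero.symm.trans (Lp.coeFn_zero ℝ 2 ν)] with a ha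
    by_cases haC : 0 < m a
    · exact (mul_eq_zero.1 ha).resolve_right haC.ne'
    · exact hgC a haC
  · filter_upwards [hG.coeFn_toLp, hm0] with a ha ha0
    rw [ha, abs_mul, abs_of_nonneg ha0]
    exact mul_le_of_le_one_left ha0 (hg1 a)
  · calc ⟪hG.toLp, Ψ i⟫_ℝ = ∫ a, g a * m a * Ψ i a ∂ν := by
          rw [real_inner_eq_integral]
          exact integral_congr_ae (by filter_upwards [hG.coeFn_toLp] with a ha using by rw [ha])
      _ = (∫ a, g a • m a • fun i => Ψ i a ∂ν) i := by
          rw [eval_integral (fun j => hgmΨ.eval j)]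
          simp [mul_assoc]
      _ = 0 := by rw [hgΨ, Pi.zero_apply]

lemma exists_add_sub_mem_relaxedSolutions [Fintype ι] (hν : ν.IsNonatomic)
    {Ψ : ι → Lp ℝ 2 ν} {c : ι → ℝ} {h : Lp ℝ 2 ν} (hh : h ∈ relaxedSolutions Ψ c)
    (hC : 0 < ν {a | 0 < min (h a) (1 - h a)}) :
    ∃ G ≠ 0, h + G ∈ relaxedSolutions Ψ c ∧ h - G ∈ relaxedSolutions Ψ c := by
  obtain ⟨hh01, hhΨ⟩ := hh
  have hh_meas : Measurable (h : A → ℝ) := (Lp.stronglyMeasurable h).measurable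
  have hm_meas : Measurable fun a => min (h a) (1 - h a) :=
    hh_meas.min (measurable_const.sub hh_meas)
  have hm0 : ∀ᵐ a ∂ν, 0 ≤ min (h a) (1 - h a) := by
    filter_upwards [hh01] with a ha using le_min ha.1 (sub_nonneg.2 ha.2)
  have hm : MemLp (fun a => min (h a) (1 - h a)) 2 ν :=
    (Lp.memLp h).of_le hm_meas.aestronglyMeasurable (by
      filter_upwards [hm0] with a ha
      exact abs_le_abs (min_le_left _ _) ((neg_nonpos.2 ha).trans (ha.trans (min_le_left _ _))))
  obtain ⟨G, hG0, hGm, hGΨ⟩ := exists_ne_zero_abs_le_inner_eq_zero hν Ψ hm_meas hm hm0 hC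
  have hGh : ∀ᵐ a ∂ν, |G a| ≤ h a ∧ |G a| ≤ 1 - h a := by
    filter_upwards [hGm] with a ha using ⟨ha.trans (min_le_left _ _), ha.trans (min_le_right _ _)⟩
  refine ⟨G, hG0, ⟨?_, fun i => by rw [inner_add_left, hGΨ, add_zero, hhΨ]⟩,
    ⟨?_, fun i => by rw [inner_sub_left, hGΨ, sub_zero, hhΨ]⟩⟩
  · filter_upwards [hGh, Lp.coeFn_add h G] with a ha hadd
    rw [hadd, Pi.add_apply]
    constructor <;> linarith [abs_le.1 ha.1, abs_le.1 ha.2]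
  · filter_upwards [hGh, Lp.coeFn_sub h G] with a ha hsub
    rw [hsub, Pi.sub_apply]
    constructor <;> linarith [abs_le.1 ha.1, abs_le.1 ha.2]

lemma ae_eq_zero_or_one_of_mem_extremePoints [Fintype ι] (hν : ν.IsNonatomic)
    {Ψ : ι → Lp ℝ 2 ν} {c : ι → ℝ} {h : Lp ℝ 2 ν}
    (hh : h ∈ extremePoints ℝ (relaxedSolutions Ψ c)) : ∀ᵐ a ∂ν, h a = 0 ∨ h a = 1 := by
  have hC : ν {a | 0 < min (h a) (1 - h a)} = 0 := by
    by_contra hC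
    obtain ⟨G, hG0, hplus, hminus⟩ :=
      exists_add_sub_mem_relaxedSolutions hν hh.1 (pos_of_ne_zero hC)
    exact hG0 (eq_zero_of_add_mem_of_sub_mem hh hplus hminus)
  filter_upwards [hh.1.1, measure_eq_zero_iff_ae_notMem.1 hC] with a ha haC
  rcases min_le_iff.1 (not_lt.1 haC) with h0 | h1
  · exact .inl (le_antisymm h0 ha.1)
  · exact .inr (le_antisymm ha.2 (by linarith))

variable [IsFiniteMeasure ν]

lemma ae_mem_Icc_iff_forall_inner (h : Lp ℝ 2 ν) :
    (∀ᵐ a ∂ν, h a ∈ Icc (0 : ℝ) 1) ↔ ∀ u : Lp ℝ 2 ν, 0 ≤ u → ⟪h, u⟫_ℝ ∈ Icc 0 (∫ a, u a ∂ν) := by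
  have hint : ∀ f : Lp ℝ 2 ν, Integrable f ν := fun f => (Lp.memLp f).integrable one_le_two
  constructor
  · intro h01 u hu
    rw [← Lp.coeFn_nonneg] at hu
    rw [real_inner_eq_integral]
    constructor
    · refine integral_nonneg_of_ae ?_
      filter_upwards [h01, hu] with a ha hua using mul_nonneg ha.1 hua
    · refine integral_mono_ae (integrable_mul h u) (hint u) ?_
      filter_upwards [h01, hu] with a ha hua using mul_le_of_le_one_left hua ha.2
  · intro H
    have hset : ∀ B, MeasurableSet B → ∫ a in B, h a ∂ν ∈ Icc 0 (ν.real B) := fun B hB => by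
      have hnonneg : 0 ≤ indicatorConstLp 2 hB (measure_ne_top ν B) (1 : ℝ) := by
        rw [← Lp.coeFn_nonneg]
        filter_upwards [indicatorConstLp_coeFn (p := 2) (hs := hB) (hμs := measure_ne_top ν B)
          (c := (1 : ℝ))] with a ha
        exact ha ▸ indicator_nonneg (fun _ _ => zero_le_one) a
      have := H _ hnonneg
      rwa [real_inner_comm, inner_indicatorConstLp_one, integral_indicatorConstLp,
        smul_eq_mul, mul_one] at this
    have h0 : ∀ᵐ a ∂ν, 0 ≤ h a := ae_nonneg_of_forall_setIntegral_nonneg (hint h)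
      fun B hB _ => (hset B hB).1
    have h1 : ∀ᵐ a ∂ν, h a ≤ 1 := ae_le_of_forall_setIntegral_le (hint h) (integrable_const 1)
      fun B hB _ => by simpa using (hset B hB).2
    filter_upwards [h0, h1] with a ha0 ha1 using ⟨ha0, ha1⟩

lemma inner_const_one (f : Lp ℝ 2 ν) : ⟪Lp.const 2 ν (1 : ℝ), f⟫_ℝ = ∫ a, f a ∂ν := by
  rw [← indicatorConstLp_univ, inner_indicatorConstLp_one, setIntegral_univ]

lemma isCompact_setOf_apply_mem_Icc_integral :
    IsCompact {Λ : WeakDual ℝ (Lp ℝ 2 ν) | ∀ u, 0 ≤ u → Λ u ∈ Icc 0 (∫ a, u a ∂ν)} := by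
  refine WeakDual.isCompact_of_bounded_of_closed ?_ ?_
  · refine (Metric.isBounded_closedBall (x := 0) (r := ‖Lp.const 2 ν (1 : ℝ)‖)).subset
      fun Λ hΛ => mem_closedBall_zero_iff.2 ?_
    refine ContinuousLinearMap.opNorm_le_bound _ (norm_nonneg _) fun u => ?_
    replace hΛ : ∀ u : Lp ℝ 2 ν, 0 ≤ u → Λ u ∈ Icc 0 (∫ a, u a ∂ν) := hΛ
    have habs := (hΛ |u| (abs_nonneg u)).2
    have hpos : 0 ≤ Λ |u| + Λ u := by
      simpa using (hΛ (|u| - -u) (sub_nonneg.2 (neg_le_abs u))).1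
    have hneg : 0 ≤ Λ |u| - Λ u := by
      simpa using (hΛ (|u| - u) (sub_nonneg.2 (le_abs_self u))).1
    have hint : ∫ a, (|u| : Lp ℝ 2 ν) a ∂ν ≤ ‖Lp.const 2 ν (1 : ℝ)‖ * ‖u‖ := by
      rw [← inner_const_one, ← norm_abs_eq_norm u]
      exact real_inner_le_norm _ _
    rw [Real.norm_eq_abs, abs_le]
    constructor <;> linarith
  · simp only [ofPred_forall]
    exact isClosed_iInter fun u => isClosed_iInter fun _ =>
      isClosed_Icc.preimage (WeakDual.eval_continuous u)

lemma extremePoints_relaxedSolutions_nonempty {Ψ : ι → Lp ℝ 2 ν} {c : ι → ℝ}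
    (hne : (relaxedSolutions Ψ c).Nonempty) :
    (extremePoints ℝ (relaxedSolutions Ψ c)).Nonempty := by
  let e := InnerProductSpace.toWeakDual (Lp ℝ 2 ν)
  have himage : e '' relaxedSolutions Ψ c =
      {Λ | ∀ u, 0 ≤ u → Λ u ∈ Icc 0 (∫ a, u a ∂ν)} ∩ ⋂ i, {Λ | Λ (Ψ i) = c i} := by
    ext Λ
    obtain ⟨h, rfl⟩ := e.surjective Λ
    simp only [e.injective.mem_set_image, relaxedSolutions, ae_mem_Icc_iff_forall_inner,
      mem_ofPred_eq, mem_inter_iff, mem_iInter, e, InnerProductSpace.toWeakDual_apply]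
  have hcompact : IsCompact (e '' relaxedSolutions Ψ c) := by
    rw [himage]
    exact isCompact_setOf_apply_mem_Icc_integral.inter_right
      (isClosed_iInter fun i => isClosed_eq (WeakDual.eval_continuous _) continuous_const)
  -- instance search does not see through the type synonym `WeakDual` of `WeakBilin`
  have : LocallyConvexSpace ℝ (WeakDual ℝ (Lp ℝ 2 ν)) :=
    inferInstanceAs (LocallyConvexSpace ℝ (WeakBilin (topDualPairing ℝ (Lp ℝ 2 ν))))
  obtain ⟨Λ, hΛ⟩ := hcompact.extremePoints_nonempty (hne.image e)
  rw [← image_extremePoints] at hΛ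
  exact image_nonempty.1 ⟨Λ, hΛ⟩

theorem exists_setIntegral_eq_mul_integral [Fintype ι] (hν : ν.IsNonatomic)
    (Ψ : ι → Lp ℝ 2 ν) {s : ℝ} (hs : s ∈ Icc 0 1) :
    ∃ B, MeasurableSet B ∧ ∀ i, ∫ a in B, Ψ i a ∂ν = s * ∫ a, Ψ i a ∂ν := by
  have hconst : s • Lp.const 2 ν (1 : ℝ) ∈ relaxedSolutions Ψ fun i => s * ∫ a, Ψ i a ∂ν := by
    refine ⟨?_, fun i => by rw [real_inner_smul_left, inner_const_one]⟩
    filter_upwards [Lp.coeFn_smul s (Lp.const 2 ν (1 : ℝ)), Lp.coeFn_const (p := 2) (μ := ν)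
      (1 : ℝ)] with a ha hc
    rw [ha, Pi.smul_apply, hc, Function.const_apply, smul_eq_mul, mul_one]
    exact hs
  obtain ⟨h, hh⟩ := extremePoints_relaxedSolutions_nonempty ⟨_, hconst⟩
  have hB : MeasurableSet {a | h a = 1} :=
    (Lp.stronglyMeasurable h).measurable (measurableSet_singleton 1)
  have hhB : h = indicatorConstLp 2 hB (measure_ne_top ν _) 1 := by
    rw [Lp.ext_iff]
    filter_upwards [ae_eq_zero_or_one_of_mem_extremePoints hν hh, indicatorConstLp_coeFn (p := 2)
      (hs := hB) (hμs := measure_ne_top ν _) (c := (1 : ℝ))] with a ha hind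
    rw [hind]
    rcases ha with ha | ha <;> simp [ha]
  refine ⟨_, hB, fun i => ?_⟩
  rw [← inner_indicatorConstLp_one hB (measure_ne_top ν _), ← hhB]
  exact hh.1.2 i

end L2

theorem Integrable.exists_memLp_top_setIntegral_eq {E : Type*} [NormedAddCommGroup E]
    [NormedSpace ℝ E] {μ : Measure A} [IsFiniteMeasure μ] {φ : A → E} (hφ : Integrable φ μ) :
    ∃ (ν : Measure A) (ψ : A → E), IsFiniteMeasure ν ∧ ν ≪ μ ∧ μ ≪ ν ∧ MemLp ψ ∞ ν ∧
      ∀ B, MeasurableSet B → ∫ a in B, ψ a ∂ν = ∫ a in B, φ a ∂μ := by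
  set w : A → ℝ≥0 := fun a => 1 + ‖φ a‖₊
  have hw : AEMeasurable w μ := aemeasurable_const.add hφ.1.nnnorm.aemeasurable
  have hνμ := withDensity_absolutelyContinuous μ fun a => (w a : ℝ≥0∞)
  refine ⟨μ.withDensity fun a => w a, fun a => (w a : ℝ)⁻¹ • φ a, isFiniteMeasure_withDensity ?_,
    hνμ, withDensity_absolutelyContinuous' hw.coe_nnreal_ennreal (ae_of_all _ fun a => by simp [w]),
    ?_, fun B hB => ?_⟩
  · simp only [w, ENNReal.coe_add, ENNReal.coe_one]
    rw [lintegral_add_left measurable_const]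
    exact ENNReal.add_ne_top.2 ⟨by simp, hφ.2.ne⟩
  · refine memLp_top_of_bound (((hw.coe_nnreal_real.inv).aestronglyMeasurable.smul hφ.1).mono_ac
      hνμ) 1 (ae_of_all _ fun a => ?_)
    simp only [w, NNReal.coe_add, NNReal.coe_one, coe_nnnorm, norm_smul, norm_inv, Real.norm_eq_abs]
    rw [abs_of_pos (by positivity), inv_mul_le_one₀ (by positivity)]
    exact le_add_of_nonneg_left zero_le_one
  · rw [setIntegral_withDensity_eq_setIntegral_smul₀ hw.restrict _ hB]
    refine setIntegral_congr_fun hB fun a _ => ?_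
    simp only [w, NNReal.smul_def, NNReal.coe_add, NNReal.coe_one, coe_nnnorm]
    exact smul_inv_smul₀ (by positivity) _

namespace Measure.IsNonatomic

variable {ι : Type*} [Fintype ι] {μ : Measure A} [IsFiniteMeasure μ]

theorem exists_setIntegral_eq_smul_integral_of_memLp (hμ : μ.IsNonatomic) {ψ : A → ι → ℝ}
    (hψ : MemLp ψ 2 μ) {s : ℝ} (hs : s ∈ Icc 0 1) :
    ∃ B, MeasurableSet B ∧ ∫ a in B, ψ a ∂μ = s • ∫ a, ψ a ∂μ := by
  obtain ⟨B, hB, hBψ⟩ := L2.exists_setIntegral_eq_mul_integral hμ (fun i => (hψ.eval i).toLp) hs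
  have hψint := hψ.integrable one_le_two
  refine ⟨B, hB, funext fun i => ?_⟩
  have hcoe := (hψ.eval i).coeFn_toLp
  rw [Pi.smul_apply, eval_integral hψint.integrableOn.eval, eval_integral hψint.eval,
    ← integral_congr_ae (ae_restrict_of_ae hcoe), ← integral_congr_ae hcoe]
  exact hBψ i

theorem exists_setIntegral_eq_smul_integral (hμ : μ.IsNonatomic) {φ : A → ι → ℝ}
    (hφ : Integrable φ μ) {s : ℝ} (hs : s ∈ Icc 0 1) :
    ∃ B, MeasurableSet B ∧ ∫ a in B, φ a ∂μ = s • ∫ a, φ a ∂μ := by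
  obtain ⟨ν, ψ, hν, hνμ, hμν, hψ, hψφ⟩ := hφ.exists_memLp_top_setIntegral_eq
  obtain ⟨B, hB, hBψ⟩ := (hμ.of_absolutelyContinuous hνμ hμν)
    |>.exists_setIntegral_eq_smul_integral_of_memLp (hψ.mono_exponent le_top) hs
  refine ⟨B, hB, ?_⟩
  have huniv := hψφ univ MeasurableSet.univ
  rw [setIntegral_univ, setIntegral_univ] at huniv
  rw [← hψφ B hB, ← huniv, hBψ]

end Measure.IsNonatomic

end MeasureTheory

/-- Richter's theorem: the Aumann integral of a correspondence
`F : A → 2^(ℝ^d)` over a non-atomic finite measure space is convex. -/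
theorem richter_aumann_integral_convex
    {A : Type*} [MeasurableSpace A] (μ : Measure A) [IsFiniteMeasure μ]
    (hna : ∀ C : Set A, MeasurableSet C → 0 < μ C →
      ∃ B ⊆ C, MeasurableSet B ∧ 0 < μ B ∧ μ B < μ C)
    (d : ℕ) (F : A → Set (Fin d → ℝ)) :
    Convex ℝ {x : Fin d → ℝ | ∃ f : A → (Fin d → ℝ),
      Integrable f μ ∧ (∀ᵐ a ∂μ, f a ∈ F a) ∧ ∫ a, f a ∂μ = x} := by
  classical
  rintro _ ⟨f, hf, hfF, rfl⟩ _ ⟨g, hg, hgF, rfl⟩ p q hp hq hpq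
  obtain ⟨B, hB, hBfg⟩ := Measure.IsNonatomic.exists_setIntegral_eq_smul_integral hna
    (hf.sub hg) ⟨hp, by linarith⟩
  refine ⟨B.piecewise f g, Integrable.piecewise hB hf.integrableOn hg.integrableOn, ?_, ?_⟩
  · filter_upwards [hfF, hgF] with a haf hag
    by_cases ha : a ∈ B <;> simp [ha, haf, hag]
  · rw [integral_piecewise hB hf.integrableOn hg.integrableOn, eq_sub_of_add_eq' hpq]
    simp only [Pi.sub_apply, integral_sub hf.integrableOn hg.integrableOn, integral_sub hf hg]
      at hBfg
    linear_combination (norm := module) hBfg + integral_add_compl hB hg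
end

section
/- Dilatation monotonicity under a common prior is preserved under infimal convolution: if each of finitely many risk measures ρ_1, …, ρ_n on L^∞(P) satisfies ρ_i(E^Q[X | G]) ≤ ρ_i(X) for every X and every sub-σ-algebra G (for a fixed Q ∼ P), and the infimal convolution (□_i ρ_i)(X) = inf { Σ ρ_i(X_i) : Σ X_i = X } is finite everywhere, then □_i ρ_i is also Q-dilatation monotone. -/
/-!
Given an allocation `X = ∑ Xᵢ`, the conditional expectations `E^Q[Xᵢ | G]` are again bounded
(boundedness passes between the equivalent measures `P` and `Q`), and by linearity they form an
allocation of `E^Q[X | G]`, hence of `Z`. Each `ρᵢ` can only decrease, so every value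
`∑ ρᵢ(Xᵢ)` of the infimal convolution at `X` dominates one at `Z`.
-/

open MeasureTheory

namespace MeasureTheory

variable {Ω E : Type*} {mΩ : MeasurableSpace Ω} {P Q : Measure Ω} [NormedAddCommGroup E]

theorem MemLp.mono_ac_top {f : Ω → E} (hf : MemLp f ⊤ P) (hQP : Q ≪ P) : MemLp f ⊤ Q := by
  refine ⟨hf.1.mono_ac hQP, ?_⟩
  have hP := hf.2
  rw [eLpNorm_exponent_top] at hP ⊢
  exact (eLpNormEssSup_mono_measure f hQP).trans_lt hP

variable [NormedSpace ℝ E] [CompleteSpace E]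

theorem MemLp.condExp_top_of_equiv {f : Ω → E} (hf : MemLp f ⊤ P) (hQP : Q ≪ P) (hPQ : P ≪ Q)
    (G : MeasurableSpace Ω) : MemLp (Q[f|G]) ⊤ P :=
  ((hf.mono_ac_top hQP).condExp le_top).mono_ac_top hPQ

theorem Lp.exists_sum_eq_of_condExp [IsFiniteMeasure Q] (hQP : Q ≪ P) (hPQ : P ≪ Q)
    {ι : Type*} (s : Finset ι) (f : ι → Lp E ⊤ P) (G : MeasurableSpace Ω) {Z : Lp E ⊤ P}
    (hZ : (Z : Ω → E) =ᵐ[Q] Q[(⇑(∑ i ∈ s, f i))|G]) :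
    ∃ g : ι → Lp E ⊤ P, ∑ i ∈ s, g i = Z ∧ ∀ i, (g i : Ω → E) =ᵐ[Q] Q[(f i : Ω → E)|G] := by
  set g : ι → Lp E ⊤ P := fun i => ((Lp.memLp (f i)).condExp_top_of_equiv hQP hPQ G).toLp _
  have hg : ∀ i, (g i : Ω → E) =ᵐ[Q] Q[(f i : Ω → E)|G] := fun i =>
    hQP.ae_le (MemLp.coeFn_toLp _)
  refine ⟨g, Lp.ext (hPQ.ae_le ?_), hg⟩
  have hsum_g : (fun ω => ∑ i ∈ s, g i ω) =ᵐ[Q] ∑ i ∈ s, Q[(f i : Ω → E)|G] := by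
    filter_upwards [(Filter.eventually_all_finset s).2 fun i _ => hg i] with ω hω
    rw [Finset.sum_apply]
    exact Finset.sum_congr rfl hω
  have hcondExp_sum : Q[(⇑(∑ i ∈ s, f i))|G] =ᵐ[Q] ∑ i ∈ s, Q[(f i : Ω → E)|G] :=
    (condExp_congr_ae (hQP.ae_le (Lp.coeFn_finsetSum s f))).trans <|
      condExp_finsetSum (fun i _ => ((Lp.memLp (f i)).mono_ac_top hQP).integrable le_top) G
  calc (⇑(∑ i ∈ s, g i) : Ω → E)
      =ᵐ[Q] fun ω => ∑ i ∈ s, g i ω := hQP.ae_le (Lp.coeFn_fun_finsetSum s g)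
    _ =ᵐ[Q] ∑ i ∈ s, Q[(f i : Ω → E)|G] := hsum_g
    _ =ᵐ[Q] Z := hcondExp_sum.symm.trans hZ.symm

end MeasureTheory

theorem infConv_dilatation_monotone_general
    {Ω : Type*} {mΩ : MeasurableSpace Ω} (P Q : Measure Ω)
    [IsProbabilityMeasure Q] (hQP : Q ≪ P) (hPQ : P ≪ Q)
    (n : ℕ) (ρ : Fin n → Lp ℝ ⊤ P → ℝ)
    (hdil : ∀ i, ∀ (G : MeasurableSpace Ω), G ≤ mΩ → ∀ X Z : Lp ℝ ⊤ P,
      (Z : Ω → ℝ) =ᵐ[Q] Q[(X : Ω → ℝ)|G] → ρ i Z ≤ ρ i X)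
    (icSet : Lp ℝ ⊤ P → Set ℝ)
    (hicSet : ∀ X, icSet X =
      {r : ℝ | ∃ f : Fin n → Lp ℝ ⊤ P, (∑ i, f i) = X ∧ r = ∑ i, ρ i (f i)})
    (hfin : ∀ X : Lp ℝ ⊤ P, (icSet X).Nonempty ∧ BddBelow (icSet X)) :
    ∀ (G : MeasurableSpace Ω), G ≤ mΩ → ∀ X Z : Lp ℝ ⊤ P,
      (Z : Ω → ℝ) =ᵐ[Q] Q[(X : Ω → ℝ)|G] → sInf (icSet Z) ≤ sInf (icSet X) := by
  intro G hG X Z hZ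
  refine le_csInf (hfin X).1 fun r hr => ?_
  rw [hicSet] at hr
  obtain ⟨f, rfl, rfl⟩ := hr
  obtain ⟨g, hsum, hg⟩ := Lp.exists_sum_eq_of_condExp hQP hPQ Finset.univ f G hZ
  have hg_mem : ∑ i, ρ i (g i) ∈ icSet Z := by
    rw [hicSet]
    exact ⟨g, hsum, rfl⟩
  calc sInf (icSet Z) ≤ ∑ i, ρ i (g i) := csInf_le (hfin Z).2 hg_mem
    _ ≤ ∑ i, ρ i (f i) := Finset.sum_le_sum fun i _ => hdil i G hG (f i) (g i) (hg i)

/-- dilatation monotonicity under a common prior `Q ∼ P` is preserved by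
the (finite) infimal convolution, provided the latter is finite everywhere. -/
theorem infConv_dilatation_monotone
    {Ω : Type*} {mΩ : MeasurableSpace Ω} (P Q : Measure Ω)
    [IsProbabilityMeasure P] [IsProbabilityMeasure Q] (hQP : Q ≪ P) (hPQ : P ≪ Q)
    (n : ℕ) (ρ : Fin n → Lp ℝ ⊤ P → ℝ)
    (hmono : ∀ i, ∀ X Y : Lp ℝ ⊤ P, X ≤ Y → ρ i X ≤ ρ i Y)
    (hcash : ∀ i, ∀ (X : Lp ℝ ⊤ P) (c : ℝ), ρ i (X + Lp.const ⊤ P c) = ρ i X + c)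
    (hdil : ∀ i, ∀ (G : MeasurableSpace Ω), G ≤ mΩ → ∀ X Z : Lp ℝ ⊤ P,
      (Z : Ω → ℝ) =ᵐ[Q] Q[(X : Ω → ℝ)|G] → ρ i Z ≤ ρ i X)
    (icSet : Lp ℝ ⊤ P → Set ℝ)
    (hicSet : ∀ X, icSet X =
      {r : ℝ | ∃ f : Fin n → Lp ℝ ⊤ P, (∑ i, f i) = X ∧ r = ∑ i, ρ i (f i)})
    (hfin : ∀ X : Lp ℝ ⊤ P, (icSet X).Nonempty ∧ BddBelow (icSet X)) :
    ∀ (G : MeasurableSpace Ω), G ≤ mΩ → ∀ X Z : Lp ℝ ⊤ P,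
      (Z : Ω → ℝ) =ᵐ[Q] Q[(X : Ω → ℝ)|G] → sInf (icSet Z) ≤ sInf (icSet X) :=
  infConv_dilatation_monotone_general P Q hQP hPQ n ρ hdil icSet hicSet hfin
end
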